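/- arXiv:1405.6499 — 4 statements merged into one kernel-verified Lean document; each statement's English description precedes it below -/
import Mathlib

section
/- For any index k = (k_1,...,k_n) of positive integers and any integer N ≥ 1, the alternating binomial transform identity holds: ∑_{i=0}^{N-1} (-1)^i C(N-1, i) s_k(i+1) = s_{k*}(N), where k* is the transpose (dual) index of k. -/
open Finset

/-- Auxiliary sum: `mhsAux ks N = ∑_{N ≥ m_1 ≥ m_2 ≥ ⋯ ≥ 1} ∏ 1/m_i^{k_i}`. -/
noncomputable def mhsAux : List ℕ → ℕ → ℝ
  | [], _ => 1
  | k :: ks, N => ∑ m ∈ Finset.Icc 1 N, (1 / (m : ℝ) ^ k) * mhsAux ks m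

/-- Finite multiple harmonic sum `s_k(N)` with largest variable fixed equal to `N`. -/
noncomputable def mhs : List ℕ → ℕ → ℝ
  | [], _ => 1
  | k :: ks, N => (1 / (N : ℝ) ^ k) * mhsAux ks N

/-- `A(k) = {k_1, k_1+k_2, …, k_1+⋯+k_{n-1}}`. -/
def indexA (k : List ℕ) : Finset ℕ :=
  (Finset.range (k.length - 1)).image fun i => (k.take (i + 1)).sum

/-- `k'` is the transpose (dual) index of `k`. -/
def IsDualIndex (k k' : List ℕ) : Prop :=
  k' ≠ [] ∧ (∀ a ∈ k', 0 < a) ∧ k'.sum = k.sum ∧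
    indexA k' = Finset.Icc 1 (k.sum - 1) \ indexA k

/-!
Write `x f (N) = f N / N` and `y f (N) = (∑_{1 ≤ m ≤ N} f m) / N`. Then `s_k` is the word
`x^(k₁-1) y x^(k₂-1) y ⋯ y x^(kₙ-1)` applied to `N ↦ 1 / N`; its letter in position `p` is `y`
exactly when `p + 1 ∈ A(k)`, so the word of `k*` is obtained by exchanging `x` and `y`.
The binomial transform `B` fixes `N ↦ 1 / N` and intertwines the two operators: `B ∘ x = y ∘ B`
by absorption `C(n,i)/(i+1) = C(n+1,i+1)/(n+1)` and the hockey-stick identity, and hence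
`B ∘ y = x ∘ B` because `B` is an involution (up to sign `B f (n + 1)` is the `n`-th forward
difference of `f` at `1`, so this is the Gregory–Newton formula).
-/

noncomputable def binomialTransform (f : ℕ → ℝ) (N : ℕ) : ℝ :=
  ∑ i ∈ range N, (-1 : ℝ) ^ i * (N - 1).choose i * f (i + 1)

@[simp] lemma binomialTransform_zero (f : ℕ → ℝ) : binomialTransform f 0 = 0 := by
  simp [binomialTransform]

lemma binomialTransform_congr_of_pos {f g : ℕ → ℝ} (h : ∀ m, 0 < m → f m = g m) (N : ℕ) :
    binomialTransform f N = binomialTransform g N :=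
  sum_congr rfl fun i _ => by rw [h (i + 1) i.succ_pos]

lemma binomialTransform_succ_eq_fwdDiff (f : ℕ → ℝ) (n : ℕ) :
    binomialTransform f (n + 1) = (-1) ^ n * (fwdDiff 1)^[n] f 1 := by
  rw [fwdDiff_iter_eq_sum_shift, mul_sum, binomialTransform, Nat.add_sub_cancel]
  refine sum_congr rfl fun i hi => ?_
  obtain ⟨j, rfl⟩ := Nat.exists_eq_add_of_le (Nat.lt_succ_iff.mp (mem_range.mp hi))
  have sign : (-1 : ℝ) ^ (i + j) * (-1) ^ j = (-1) ^ i := by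
    rw [pow_add, mul_assoc, ← mul_pow]; simp
  rw [Nat.add_sub_cancel_left, zsmul_eq_mul, smul_eq_mul, mul_one, add_comm 1 i]
  push_cast
  linear_combination (-((i + j).choose i : ℝ) * f (i + 1)) * sign

lemma binomialTransform_binomialTransform_succ (f : ℕ → ℝ) (n : ℕ) :
    binomialTransform (binomialTransform f) (n + 1) = f (n + 1) := calc
  _ = ∑ i ∈ range (n + 1), n.choose i • (fwdDiff 1)^[i] f 1 := by
    rw [binomialTransform, Nat.add_sub_cancel]
    refine sum_congr rfl fun i _ => ?_
    have sign : (-1 : ℝ) ^ i * (-1) ^ i = 1 := by rw [← mul_pow]; simp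
    rw [binomialTransform_succ_eq_fwdDiff, nsmul_eq_mul]
    linear_combination ((n.choose i : ℝ) * (fwdDiff 1)^[i] f 1) * sign
  _ = f (n + 1) := by rw [← shift_eq_sum_fwdDiff_iter, smul_eq_mul, mul_one, add_comm]

lemma binomialTransform_succ_eq_sum_range {m n : ℕ} (h : m ≤ n) (f : ℕ → ℝ) :
    binomialTransform f (m + 1) =
      ∑ i ∈ range (n + 1), (-1 : ℝ) ^ i * m.choose i * f (i + 1) := by
  rw [binomialTransform, Nat.add_sub_cancel]
  refine sum_subset (range_subset_range.2 (by omega)) fun i _ hi => ?_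
  rw [Nat.choose_eq_zero_of_lt (by simpa using hi)]
  simp

lemma sum_range_choose_eq_choose_succ (n i : ℕ) :
    ∑ m ∈ range (n + 1), m.choose i = (n + 1).choose (i + 1) := by
  induction n with
  | zero => cases i <;> simp [Nat.choose_eq_zero_of_lt]
  | succ n ih => rw [sum_range_succ, ih, Nat.choose_succ_succ' (n + 1), add_comm]

lemma choose_div_succ (n i : ℕ) :
    (n.choose i : ℝ) / (i + 1) = (n + 1).choose (i + 1) / (n + 1) := by
  rw [div_eq_div_iff (by positivity) (by positivity), mul_comm]
  exact_mod_cast Nat.add_one_mul_choose_eq n i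

lemma binomialTransform_div (f : ℕ → ℝ) (N : ℕ) :
    binomialTransform (fun m => f m / m) N =
      (∑ m ∈ range N, binomialTransform f (m + 1)) / N := by
  rcases N with _ | n
  · simp
  have hockey : ∑ m ∈ range (n + 1), binomialTransform f (m + 1) =
      ∑ i ∈ range (n + 1), (-1 : ℝ) ^ i * (n + 1).choose (i + 1) * f (i + 1) := by
    rw [sum_congr rfl fun m hm =>
      binomialTransform_succ_eq_sum_range (Nat.lt_succ_iff.mp (mem_range.mp hm)) f, sum_comm]
    refine sum_congr rfl fun i _ => ?_
    rw [← sum_mul, ← mul_sum, ← Nat.cast_sum, sum_range_choose_eq_choose_succ]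
  rw [hockey, sum_div, binomialTransform, Nat.add_sub_cancel]
  refine sum_congr rfl fun i _ => ?_
  push_cast
  linear_combination ((-1 : ℝ) ^ i * f (i + 1)) * choose_div_succ n i

lemma binomialTransform_const_one_succ (m : ℕ) :
    binomialTransform (fun _ => 1) (m + 1) = if m = 0 then 1 else 0 := by
  simp only [binomialTransform, Nat.add_sub_cancel, mul_one]
  exact_mod_cast Int.alternating_sum_range_choose

lemma binomialTransform_one_div (N : ℕ) :
    binomialTransform (fun m => 1 / (m : ℝ)) N = 1 / N := by
  rw [binomialTransform_div (fun _ => 1)]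
  rcases N with _ | n <;> simp [binomialTransform_const_one_succ]

lemma binomialTransform_partialSum_div (f : ℕ → ℝ) (N : ℕ) :
    binomialTransform (fun m => (∑ j ∈ range m, f (j + 1)) / m) N =
      binomialTransform f N / N := by
  rcases N with _ | n
  · simp
  calc _ = binomialTransform (binomialTransform fun m => binomialTransform f m / m) (n + 1) := by
        refine binomialTransform_congr_of_pos (fun m hm => ?_) _
        obtain ⟨p, rfl⟩ := Nat.exists_eq_succ_of_ne_zero hm.ne'
        simp only [binomialTransform_div, binomialTransform_binomialTransform_succ]
    _ = _ := by rw [binomialTransform_binomialTransform_succ, Nat.cast_succ]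

/-- The letters are `x = false` and `y = true`. -/
noncomputable def evalWord : List Bool → ℕ → ℝ
  | [], N => 1 / N
  | false :: w, N => evalWord w N / N
  | true :: w, N => (∑ m ∈ range N, evalWord w (m + 1)) / N

lemma binomialTransform_evalWord (w : List Bool) (N : ℕ) :
    binomialTransform (evalWord w) N = evalWord (w.map not) N := by
  induction w generalizing N with
  | nil => exact binomialTransform_one_div N
  | cons b w ih =>
    cases b
    · show binomialTransform (fun m => evalWord w m / m) N = _
      simp only [binomialTransform_div, ih]
      rfl
    · show binomialTransform (fun m => (∑ j ∈ range m, evalWord w (j + 1)) / m) N = _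
      rw [binomialTransform_partialSum_div, ih]
      rfl

lemma evalWord_replicate_false_append (m : ℕ) (w : List Bool) (N : ℕ) :
    evalWord (List.replicate m false ++ w) N = evalWord w N / N ^ m := by
  induction m with
  | zero => simp
  | succ m ih => rw [List.replicate_succ, List.cons_append, evalWord, ih, pow_succ, div_div]

def wordOf (L : ℕ) (A : Finset ℕ) : List Bool :=
  (List.range L).map fun p => decide (p + 1 ∈ A)

lemma map_not_wordOf (L : ℕ) (A : Finset ℕ) :
    (wordOf L A).map not = wordOf L (Icc 1 L \ A) := by
  simp only [wordOf, List.map_map]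
  refine List.map_congr_left fun p hp => ?_
  simp only [List.mem_range] at hp
  simp [hp]

lemma wordOf_empty (L : ℕ) : wordOf L ∅ = List.replicate L false := by
  simp [wordOf]

lemma wordOf_add {a : ℕ} (ha : 0 < a) (L : ℕ) (A : Finset ℕ) :
    wordOf (a + L) (insert a (A.image (a + ·))) =
      List.replicate (a - 1) false ++ true :: wordOf L A := by
  obtain ⟨a, rfl⟩ := Nat.exists_eq_succ_of_ne_zero ha.ne'
  simp only [wordOf, List.range_add, List.range_succ, List.map_append, List.map_map,
    List.append_assoc, List.map_cons, List.singleton_append]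
  congr 1
  · rw [List.eq_replicate_iff]
    refine ⟨by simp, ?_⟩
    simp only [List.mem_map, List.mem_range]
    rintro _ ⟨p, hp, rfl⟩
    simp only [decide_eq_false_iff_not, mem_insert, mem_image]
    rintro (h | ⟨x, -, h⟩) <;> omega
  · simp [Function.comp_def, add_assoc]

lemma indexA_cons_cons (a b : ℕ) (l : List ℕ) :
    indexA (a :: b :: l) = insert a ((indexA (b :: l)).image (a + ·)) := by
  simp only [indexA, List.length_cons, Nat.add_sub_cancel, range_add_one', image_insert,
    map_eq_image, image_image]
  rfl

lemma mhs_eq_evalWord {k : List ℕ} (hk : k ≠ []) (hpos : ∀ a ∈ k, 0 < a) (N : ℕ) :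
    mhs k N = evalWord (wordOf (k.sum - 1) (indexA k)) N := by
  induction k generalizing N with
  | nil => exact absurd rfl hk
  | cons a l ih =>
    have ha : 0 < a := hpos a List.mem_cons_self
    have hpow : (N : ℝ) * N ^ (a - 1) = N ^ a := by rw [← pow_succ', Nat.sub_add_cancel ha]
    cases l with
    | nil =>
      rw [mhs, mhsAux, mul_one, show indexA [a] = ∅ by simp [indexA], List.sum_singleton,
        wordOf_empty, ← List.append_nil (List.replicate _ false), evalWord_replicate_false_append,
        evalWord, div_div, hpow]
    | cons b l =>
      have hb : 0 < b := hpos b (by simp)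
      have hlen : (a :: b :: l).sum - 1 = a + ((b :: l).sum - 1) := by simp only [List.sum_cons]; omega
      have ih' := ih (by simp) fun x hx => hpos x (List.mem_cons_of_mem a hx)
      rw [hlen, indexA_cons_cons, wordOf_add ha, evalWord_replicate_false_append, evalWord]
      simp only [← ih', div_div, hpow]
      show 1 / (N : ℝ) ^ a * ∑ m ∈ Icc 1 N, mhs (b :: l) m = _
      rw [range_eq_Ico, sum_Ico_add' (mhs (b :: l)) 0 N 1, zero_add, Ico_add_one_right_eq_Icc,
        one_div_mul_eq_div]

theorem duality_of_finite_multiple_harmonic_sums_general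
    (k k' : List ℕ) (hk : k ≠ []) (hpos : ∀ a ∈ k, 0 < a)
    (hdual : IsDualIndex k k') (N : ℕ) :
    ∑ i ∈ Finset.range N, (-1 : ℝ) ^ i * (N - 1).choose i * mhs k (i + 1)
      = mhs k' N := by
  obtain ⟨hk'_ne, hk'_pos, hsum, hA⟩ := hdual
  have hword : mhs k = evalWord (wordOf (k.sum - 1) (indexA k)) := funext (mhs_eq_evalWord hk hpos)
  calc _ = binomialTransform (mhs k) N := rfl
    _ = evalWord ((wordOf (k.sum - 1) (indexA k)).map not) N := by
      rw [hword, binomialTransform_evalWord]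
    _ = mhs k' N := by rw [map_not_wordOf, ← hA, ← hsum, mhs_eq_evalWord hk'_ne hk'_pos]

theorem duality_of_finite_multiple_harmonic_sums
    (k k' : List ℕ) (hk : k ≠ []) (hpos : ∀ a ∈ k, 0 < a)
    (hdual : IsDualIndex k k') (N : ℕ) (hN : 1 ≤ N) :
    ∑ i ∈ Finset.range N, (-1 : ℝ) ^ i * (N - 1).choose i * mhs k (i + 1)
      = mhs k' N :=
  duality_of_finite_multiple_harmonic_sums_general k k' hk hpos hdual N
end

section
/- The double zeta-star value satisfies ζ*(2,1) = 2·ζ(2,1), where ζ*(2,1) = ∑_{m ≥ n ≥ 1} 1/(m^2 n) and ζ(2,1) = ∑_{m > n ≥ 1} 1/(m^2 n). -/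
open Filter Finset

/-- Double zeta value `ζ(a,b) = ∑_{m > n ≥ 1} 1/(m^a n^b)`. -/
noncomputable def doubleZeta (a b : ℕ) : ℝ :=
  ∑' p : {p : ℕ × ℕ // 1 ≤ p.2 ∧ p.2 < p.1}, 1 / ((p.1.1 : ℝ) ^ a * (p.1.2 : ℝ) ^ b)

/-- Double zeta-star value `ζ*(a,b) = ∑_{m ≥ n ≥ 1} 1/(m^a n^b)`. -/
noncomputable def doubleZetaStar (a b : ℕ) : ℝ :=
  ∑' p : {p : ℕ × ℕ // 1 ≤ p.2 ∧ p.2 ≤ p.1}, 1 / ((p.1.1 : ℝ) ^ a * (p.1.2 : ℝ) ^ b)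

namespace ZetaStarAux

noncomputable def Bfn : ℕ × ℕ → ℝ := fun x => 1 / (((x.1 : ℝ) + x.2 + 2) ^ 2 * ((x.2 : ℝ) + 1))
noncomputable def Dfn : ℕ × ℕ → ℝ := fun x => 1 / (((x.1 : ℝ) + 1) * ((x.1 : ℝ) + x.2 + 2) ^ 2)
noncomputable def Ffn : ℕ × ℕ → ℝ :=
  fun x => 1 / (((x.1 : ℝ) + 1) * ((x.2 : ℝ) + 1) * ((x.1 : ℝ) + x.2 + 2))
noncomputable def Cfn : ℕ × ℕ → ℝ := fun x => 1 / (((x.1 : ℝ) + x.2 + 1) ^ 2 * ((x.2 : ℝ) + 1))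
noncomputable def Pfn : ℕ × ℕ → ℝ :=
  fun x => (1 / (((x.1 : ℝ) + 1) * Real.sqrt ((x.1 : ℝ) + 1))) *
    (1 / (((x.2 : ℝ) + 1) * Real.sqrt ((x.2 : ℝ) + 1)))

lemma summable_one_div_nat_mul_sqrt :
    Summable (fun n : ℕ => 1 / (((n : ℝ) + 1) * Real.sqrt ((n : ℝ) + 1))) := by
  have h0 : Summable (fun n : ℕ => 1 / (n : ℝ) ^ ((3 : ℝ) / 2)) :=
    Real.summable_one_div_nat_rpow.mpr (by norm_num)
  have h1 : Summable (fun n : ℕ => 1 / ((n + 1 : ℕ) : ℝ) ^ ((3 : ℝ) / 2)) :=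
    (summable_nat_add_iff 1).mpr h0
  refine h1.congr fun n => ?_
  have h2 : (((n + 1 : ℕ) : ℝ)) ^ ((3 : ℝ) / 2) = ((n : ℝ) + 1) * Real.sqrt ((n : ℝ) + 1) := by
    push_cast
    rw [show ((3 : ℝ) / 2) = 1 + 1 / 2 by norm_num, Real.rpow_add (by positivity),
      Real.rpow_one, Real.sqrt_eq_rpow]
  rw [h2]

lemma summable_P : Summable Pfn :=
  summable_one_div_nat_mul_sqrt.mul_of_nonneg summable_one_div_nat_mul_sqrt
    (fun n => by positivity) (fun n => by positivity)

lemma sqrt_facts (i k : ℕ) :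
    Real.sqrt (((i : ℝ) + 1) * ((k : ℝ) + 1)) ≤ (i : ℝ) + (k : ℝ) + 2 ∧
    (0 : ℝ) < Real.sqrt (((i : ℝ) + 1) * ((k : ℝ) + 1)) ∧
    Pfn (i, k) = 1 / ((((i : ℝ) + 1) * ((k : ℝ) + 1)) *
      Real.sqrt (((i : ℝ) + 1) * ((k : ℝ) + 1))) := by
  have ha : (0 : ℝ) ≤ (i : ℝ) + 1 := by positivity
  have hb : (0 : ℝ) ≤ (k : ℝ) + 1 := by positivity
  refine ⟨?_, Real.sqrt_pos.mpr (by positivity), ?_⟩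
  · have h1 : ((i : ℝ) + 1) * ((k : ℝ) + 1) ≤ ((i : ℝ) + (k : ℝ) + 2) ^ 2 := by
      nlinarith [sq_nonneg ((i : ℝ) - (k : ℝ))]
    calc Real.sqrt (((i : ℝ) + 1) * ((k : ℝ) + 1))
        ≤ Real.sqrt (((i : ℝ) + (k : ℝ) + 2) ^ 2) := Real.sqrt_le_sqrt h1
      _ = (i : ℝ) + (k : ℝ) + 2 := Real.sqrt_sq (by positivity)
  · simp only [Pfn]
    rw [Real.sqrt_mul ha, one_div_mul_one_div]
    ring_nf

lemma tele_term {u : ℝ} (hu : 0 < u) : 1 / (u * (u + 1)) = 1 / u - 1 / (u + 1) := by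
  rw [div_sub_div _ _ hu.ne' (by positivity), div_eq_div_iff (by positivity) (by positivity)]
  ring

lemma summable_B : Summable Bfn := by
  refine summable_P.of_nonneg_of_le (fun x => by simp only [Bfn]; positivity) ?_
  rintro ⟨i, k⟩
  obtain ⟨h1, h2, h3⟩ := sqrt_facts i k
  rw [h3]
  simp only [Bfn]
  set s := Real.sqrt (((i : ℝ) + 1) * ((k : ℝ) + 1)) with hs
  apply one_div_le_one_div_of_le
  · exact mul_pos (by positivity) h2
  · have hab : (0 : ℝ) ≤ ((i : ℝ) + 1) * ((k : ℝ) + 1) := by positivity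
    have step1 : ((i : ℝ) + 1) * ((k : ℝ) + 1) * s ≤
        ((i : ℝ) + 1) * ((k : ℝ) + 1) * ((i : ℝ) + (k : ℝ) + 2) :=
      mul_le_mul_of_nonneg_left h1 hab
    have step2 : ((i : ℝ) + 1) * ((k : ℝ) + 1) * ((i : ℝ) + (k : ℝ) + 2) ≤
        ((i : ℝ) + (k : ℝ) + 2) ^ 2 * ((k : ℝ) + 1) := by
      nlinarith [Nat.cast_nonneg (α := ℝ) i, Nat.cast_nonneg (α := ℝ) k,
        sq_nonneg ((k : ℝ) + 1)]
    linarith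

lemma summable_C : Summable Cfn := by
  have h4 : Summable (fun x : ℕ × ℕ => 4 * Pfn x) := summable_P.mul_left 4
  refine h4.of_nonneg_of_le (fun x => by simp only [Cfn]; positivity) ?_
  rintro ⟨i, k⟩
  obtain ⟨h1, h2, h3⟩ := sqrt_facts i k
  rw [h3]
  simp only [Cfn]
  set s := Real.sqrt (((i : ℝ) + 1) * ((k : ℝ) + 1)) with hs
  rw [mul_one_div]
  rw [div_le_div_iff₀ (by positivity) (mul_pos (by positivity) h2)]
  have hi : (0 : ℝ) ≤ (i : ℝ) := Nat.cast_nonneg i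
  have hk : (0 : ℝ) ≤ (k : ℝ) := Nat.cast_nonneg k
  have hab : (0 : ℝ) ≤ ((i : ℝ) + 1) * ((k : ℝ) + 1) := by positivity
  have step1 : ((i : ℝ) + 1) * ((k : ℝ) + 1) * s ≤
      ((i : ℝ) + 1) * ((k : ℝ) + 1) * ((i : ℝ) + (k : ℝ) + 2) :=
    mul_le_mul_of_nonneg_left h1 hab
  have step2 : ((i : ℝ) + 1) * ((k : ℝ) + 1) * ((i : ℝ) + (k : ℝ) + 2) ≤
      4 * (((i : ℝ) + (k : ℝ) + 1) ^ 2 * ((k : ℝ) + 1)) := by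
    nlinarith [mul_nonneg hi hk, mul_nonneg (mul_nonneg hi hi) hk,
      mul_nonneg (mul_nonneg hi hk) hk, mul_nonneg (mul_nonneg hk hk) hk,
      mul_nonneg (mul_nonneg hi hi) hi, sq_nonneg ((i : ℝ) + (k : ℝ))]
  rw [one_mul]
  exact le_trans step1 step2

lemma D_eq_B_swap : Dfn = Bfn ∘ (Equiv.prodComm ℕ ℕ) := by
  funext x
  simp only [Dfn, Bfn, Function.comp, Equiv.prodComm_apply, Prod.swap]
  ring

lemma summable_D : Summable Dfn := by
  rw [D_eq_B_swap]
  exact ((Equiv.prodComm ℕ ℕ).summable_iff).mpr summable_B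

lemma tsum_D_eq : ∑' x, Dfn x = ∑' x, Bfn x := by
  conv_lhs => rw [D_eq_B_swap]
  exact (Equiv.prodComm ℕ ℕ).tsum_eq Bfn

lemma F_eq : ∀ x, Ffn x = Dfn x + Bfn x := by
  intro ⟨i, k⟩
  simp only [Ffn, Dfn, Bfn]
  have h1 : ((i : ℝ) + 1) > 0 := by positivity
  have h2 : ((k : ℝ) + 1) > 0 := by positivity
  have h3 : ((i : ℝ) + (k : ℝ) + 2) > 0 := by positivity
  field_simp
  ring

lemma summable_F : Summable Ffn :=
  (summable_D.add summable_B).congr fun x => (F_eq x).symm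

lemma tsum_F_eq_two_B : ∑' x, Ffn x = 2 * ∑' x, Bfn x := by
  rw [tsum_congr F_eq, Summable.tsum_add summable_D summable_B, tsum_D_eq]
  ring

/-- telescoping: `∑_k 1/((k+c+1)(k+c+2)) = 1/(c+1)` -/
lemma tele (c : ℕ) :
    HasSum (fun k : ℕ => 1 / (((k : ℝ) + c + 1) * ((k : ℝ) + c + 2))) (1 / ((c : ℝ) + 1)) := by
  have hsq : Summable (fun k : ℕ => 1 / ((k : ℝ) + 1) ^ 2) := by
    have h0 : Summable (fun n : ℕ => 1 / (n : ℝ) ^ (2 : ℕ)) :=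
      Real.summable_one_div_nat_pow.mpr one_lt_two
    have h1 := (summable_nat_add_iff 1).mpr h0
    exact h1.congr fun n => by push_cast; ring
  have hsummable : Summable (fun k : ℕ => 1 / (((k : ℝ) + c + 1) * ((k : ℝ) + c + 2))) := by
    refine hsq.of_nonneg_of_le (fun k => by positivity) fun k => ?_
    apply one_div_le_one_div_of_le (by positivity)
    have hc : (0 : ℝ) ≤ (c : ℝ) := Nat.cast_nonneg c
    nlinarith [Nat.cast_nonneg (α := ℝ) k]
  rw [hsummable.hasSum_iff_tendsto_nat]
  have hpart : ∀ n : ℕ,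
      ∑ k ∈ range n, 1 / (((k : ℝ) + c + 1) * ((k : ℝ) + c + 2)) =
        1 / ((c : ℝ) + 1) - 1 / ((n : ℝ) + c + 1) := by
    intro n
    calc ∑ k ∈ range n, 1 / (((k : ℝ) + c + 1) * ((k : ℝ) + c + 2))
        = ∑ k ∈ range n, (1 / ((k : ℝ) + c + 1) - 1 / (((k + 1 : ℕ) : ℝ) + c + 1)) := by
          refine Finset.sum_congr rfl fun k _ => ?_
          push_cast
          rw [show ((k : ℝ) + c + 2) = ((k : ℝ) + c + 1) + 1 by ring,
            show ((k : ℝ) + 1 + c + 1) = ((k : ℝ) + c + 1) + 1 by ring]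
          exact tele_term (by positivity)
      _ = 1 / (((0 : ℕ) : ℝ) + c + 1) - 1 / ((n : ℝ) + c + 1) :=
          Finset.sum_range_sub' (fun k : ℕ => 1 / ((k : ℝ) + c + 1)) n
      _ = 1 / ((c : ℝ) + 1) - 1 / ((n : ℝ) + c + 1) := by norm_num
  simp only [hpart]
  have hlim : Tendsto (fun n : ℕ => 1 / ((n : ℝ) + c + 1)) atTop (nhds 0) := by
    simp only [one_div]
    apply Tendsto.inv_tendsto_atTop
    apply tendsto_atTop_add_const_right
    apply tendsto_atTop_add_const_right
    exact tendsto_natCast_atTop_atTop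
  have h := (tendsto_const_nhds (x := 1 / ((c : ℝ) + 1)) (f := atTop (α := ℕ))).sub hlim
  simpa using h

/-- `∑_k 1/((k+1)(k+i+2)) = H_{i+1}/(i+1)` -/
lemma inner_sum (i : ℕ) :
    HasSum (fun k : ℕ => 1 / (((k : ℝ) + 1) * ((k : ℝ) + i + 2)))
      ((1 / ((i : ℝ) + 1)) * ∑ n ∈ range (i + 1), 1 / ((n : ℝ) + 1)) := by
  have h := hasSum_sum (s := range (i + 1))
    (f := fun (n : ℕ) (k : ℕ) => 1 / (((k : ℝ) + n + 1) * ((k : ℝ) + n + 2)))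
    (a := fun n => 1 / ((n : ℝ) + 1)) (fun n _ => tele n)
  have h2 := h.mul_left (1 / ((i : ℝ) + 1))
  have key : (fun k : ℕ => (1 / ((i : ℝ) + 1)) *
      ∑ n ∈ range (i + 1), 1 / (((k : ℝ) + n + 1) * ((k : ℝ) + n + 2))) =
      fun k : ℕ => 1 / (((k : ℝ) + 1) * ((k : ℝ) + i + 2)) := by
    funext k
    have hsum : ∑ n ∈ range (i + 1), 1 / (((k : ℝ) + n + 1) * ((k : ℝ) + n + 2)) =
        1 / ((k : ℝ) + 1) - 1 / ((k : ℝ) + ((i + 1 : ℕ) : ℝ) + 1) := by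
      calc ∑ n ∈ range (i + 1), 1 / (((k : ℝ) + n + 1) * ((k : ℝ) + n + 2))
          = ∑ n ∈ range (i + 1),
              (1 / ((k : ℝ) + n + 1) - 1 / ((k : ℝ) + ((n + 1 : ℕ) : ℝ) + 1)) := by
            refine Finset.sum_congr rfl fun n _ => ?_
            push_cast
            rw [show ((k : ℝ) + n + 2) = ((k : ℝ) + n + 1) + 1 by ring,
              show ((k : ℝ) + ((n : ℝ) + 1) + 1) = ((k : ℝ) + n + 1) + 1 by ring]
            exact tele_term (by positivity)
        _ = 1 / ((k : ℝ) + ((0 : ℕ) : ℝ) + 1) - 1 / ((k : ℝ) + ((i + 1 : ℕ) : ℝ) + 1) :=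
            Finset.sum_range_sub' (fun n : ℕ => 1 / ((k : ℝ) + n + 1)) (i + 1)
        _ = _ := by norm_num
    rw [hsum]
    push_cast
    have h1 : ((k : ℝ) + 1) ≠ 0 := by positivity
    have h2 : ((k : ℝ) + ((i : ℝ) + 1) + 1) ≠ 0 := by positivity
    have h3 : ((i : ℝ) + 1) ≠ 0 := by positivity
    have h4 : ((k : ℝ) + (i : ℝ) + 2) ≠ 0 := by positivity
    field_simp
    ring_nf
    try tauto
  rwa [key] at h2

lemma rowF (i : ℕ) :
    HasSum (fun k : ℕ => Ffn (i, k))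
      ((1 / ((i : ℝ) + 1) ^ 2) * ∑ n ∈ range (i + 1), 1 / ((n : ℝ) + 1)) := by
  have h := (inner_sum i).mul_left (1 / ((i : ℝ) + 1))
  have hfun : (fun k : ℕ => (1 / ((i : ℝ) + 1)) * (1 / (((k : ℝ) + 1) * ((k : ℝ) + i + 2)))) =
      fun k : ℕ => Ffn (i, k) := by
    funext k
    simp only [Ffn]
    rw [one_div_mul_one_div]
    ring
  rw [hfun] at h
  have e : (1 : ℝ) / ((i : ℝ) + 1) ^ 2 = 1 / ((i : ℝ) + 1) * (1 / ((i : ℝ) + 1)) := by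
    rw [one_div_mul_one_div, sq]
  rw [e, mul_assoc]
  exact h

lemma tsum_F_eq_sum_H :
    ∑' x, Ffn x = ∑' i : ℕ, (1 / ((i : ℝ) + 1) ^ 2) * ∑ n ∈ range (i + 1), 1 / ((n : ℝ) + 1) := by
  rw [Summable.tsum_prod' summable_F fun i => (rowF i).summable]
  exact tsum_congr fun i => (rowF i).tsum_eq

/-- equiv onto the strict subtype -/
def eLT : ℕ × ℕ ≃ {p : ℕ × ℕ // 1 ≤ p.2 ∧ p.2 < p.1} where
  toFun := fun x => ⟨(x.1 + x.2 + 2, x.2 + 1), by omega⟩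
  invFun := fun p => (p.1.1 - p.1.2 - 1, p.1.2 - 1)
  left_inv := by
    rintro ⟨i, k⟩
    show (i + k + 2 - (k + 1) - 1, (k + 1) - 1) = (i, k)
    rw [Prod.mk.injEq]
    omega
  right_inv := by
    rintro ⟨⟨m, n⟩, h1, h2⟩
    have h1' : 1 ≤ n := h1
    have h2' : n < m := h2
    apply Subtype.ext
    show (m - n - 1 + (n - 1) + 2, (n - 1) + 1) = (m, n)
    rw [Prod.mk.injEq]
    omega

/-- equiv onto the weak subtype -/
def eLE : ℕ × ℕ ≃ {p : ℕ × ℕ // 1 ≤ p.2 ∧ p.2 ≤ p.1} where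
  toFun := fun x => ⟨(x.1 + x.2 + 1, x.2 + 1), by omega⟩
  invFun := fun p => (p.1.1 - p.1.2, p.1.2 - 1)
  left_inv := by
    rintro ⟨i, k⟩
    show (i + k + 1 - (k + 1), (k + 1) - 1) = (i, k)
    rw [Prod.mk.injEq]
    omega
  right_inv := by
    rintro ⟨⟨m, n⟩, h1, h2⟩
    have h1' : 1 ≤ n := h1
    have h2' : n ≤ m := h2
    apply Subtype.ext
    show (m - n + (n - 1) + 1, (n - 1) + 1) = (m, n)
    rw [Prod.mk.injEq]
    omega

/-- sigma equiv onto the weak subtype -/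
def eSig : (Σ i : ℕ, Fin (i + 1)) ≃ {p : ℕ × ℕ // 1 ≤ p.2 ∧ p.2 ≤ p.1} where
  toFun := fun x => ⟨(x.1 + 1, x.2.val + 1), by exact ⟨by omega, by have := x.2.isLt; omega⟩⟩
  invFun := fun p => ⟨p.1.1 - 1, ⟨p.1.2 - 1, by have h1 := p.2.1; have h2 := p.2.2; omega⟩⟩
  left_inv := fun _ => rfl
  right_inv := by
    rintro ⟨⟨m, n⟩, h1, h2⟩
    have h1' : 1 ≤ n := h1
    have h2' : n ≤ m := h2
    apply Subtype.ext
    show ((m - 1) + 1, (n - 1) + 1) = (m, n)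
    rw [Prod.mk.injEq]
    omega

end ZetaStarAux

open ZetaStarAux in
theorem zetaStar_two_one_eq_two_mul_zeta_two_one :
    doubleZetaStar 2 1 = 2 * doubleZeta 2 1 := by
  have hζ : doubleZeta 2 1 = ∑' x, Bfn x := by
    rw [doubleZeta, ← eLT.tsum_eq]
    refine tsum_congr fun x => ?_
    simp only [eLT, Equiv.coe_fn_mk, Bfn]
    push_cast
    ring
  have hcomp : ((fun p : {p : ℕ × ℕ // 1 ≤ p.2 ∧ p.2 ≤ p.1} =>
      1 / ((p.1.1 : ℝ) ^ 2 * (p.1.2 : ℝ) ^ 1)) ∘ eLE) = Cfn := by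
    funext x
    simp only [Function.comp, eLE, Equiv.coe_fn_mk, Cfn]
    push_cast
    ring
  have hsummableLE : Summable (fun p : {p : ℕ × ℕ // 1 ≤ p.2 ∧ p.2 ≤ p.1} =>
      1 / ((p.1.1 : ℝ) ^ 2 * (p.1.2 : ℝ) ^ 1)) := by
    rw [← eLE.summable_iff, hcomp]
    exact summable_C
  have hζstar : doubleZetaStar 2 1 =
      ∑' i : ℕ, (1 / ((i : ℝ) + 1) ^ 2) * ∑ n ∈ range (i + 1), 1 / ((n : ℝ) + 1) := by
    rw [doubleZetaStar, ← eSig.tsum_eq]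
    have hsig : Summable (fun c : (i : ℕ) × Fin (i + 1) =>
        1 / (((eSig c).1.1 : ℝ) ^ 2 * ((eSig c).1.2 : ℝ) ^ 1)) :=
      eSig.summable_iff.mpr hsummableLE
    rw [Summable.tsum_sigma' (fun i => Summable.of_finite) hsig]
    refine tsum_congr fun i => ?_
    rw [tsum_fintype]
    have hterm : ∀ n : Fin (i + 1),
        1 / (((eSig ⟨i, n⟩ : {p : ℕ × ℕ // 1 ≤ p.2 ∧ p.2 ≤ p.1}).1.1 : ℝ) ^ 2 *
          ((eSig ⟨i, n⟩ : {p : ℕ × ℕ // 1 ≤ p.2 ∧ p.2 ≤ p.1}).1.2 : ℝ) ^ 1) =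
        (1 / ((i : ℝ) + 1) ^ 2) * (1 / ((n.val : ℝ) + 1)) := by
      intro n
      simp only [eSig, Equiv.coe_fn_mk]
      push_cast
      rw [one_div_mul_one_div]
      ring
    rw [Finset.sum_congr rfl fun n _ => hterm n, ← Finset.mul_sum]
    congr 1
    exact Fin.sum_univ_eq_sum_range (fun n => 1 / ((n : ℝ) + 1)) (i + 1)
  rw [hζstar, ← tsum_F_eq_sum_H, tsum_F_eq_two_B, hζ]
end

section
/- Euler's relation: ζ(2,1) = ζ(3), i.e., ∑_{m > n ≥ 1} 1/(m^2 n) = ∑_{m ≥ 1} 1/m^3. -/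
open Finset Filter Topology

/-- Antitonicity makes the terms nonnegative, so the unconditional sum is the limit of the
partial sums. -/
theorem Antitone.hasSum_sub_nat_add {u : ℕ → ℝ} (hu : Antitone u) (hlim : Tendsto u atTop (𝓝 0))
    (k : ℕ) : HasSum (fun n => u n - u (n + k)) (∑ i ∈ range k, u i) := by
  rw [hasSum_iff_tendsto_nat_of_nonneg fun n => sub_nonneg.2 (hu (Nat.le_add_right n k))]
  have hpartial : ∀ N, ∑ n ∈ range N, (u n - u (n + k))
      = ∑ i ∈ range k, u i - ∑ i ∈ range k, u (N + i) := by
    intro N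
    have hN := sum_range_add u N k
    have hk := sum_range_add u k N
    rw [add_comm k N] at hk
    simp only [add_comm k] at hk
    rw [sum_sub_distrib]
    linarith
  simp only [hpartial]
  simpa using tendsto_const_nhds.sub
    (tendsto_finsetSum (range k) fun i _ => hlim.comp (tendsto_add_atTop_nat i))

theorem hasSum_inv_sub_inv_harmonic (k : ℕ) :
    HasSum (fun n : ℕ => ((n : ℝ) + 1)⁻¹ - ((n : ℝ) + k + 1)⁻¹) (harmonic k) := by
  have hanti : Antitone fun n : ℕ => ((n : ℝ) + 1)⁻¹ := fun _ _ h =>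
    inv_anti₀ (by positivity) (by gcongr)
  have hlim : Tendsto (fun n : ℕ => ((n : ℝ) + 1)⁻¹) atTop (𝓝 0) := by
    simpa using tendsto_one_div_add_atTop_nhds_zero_nat (𝕜 := ℝ)
  convert hanti.hasSum_sub_nat_add hlim k using 1
  · push_cast
    simp only [add_right_comm _ _ (1 : ℝ)]
  · simp [harmonic]

theorem inv_add_mul_mul_le_rpow {x y : ℝ} (hx : 0 < x) (hy : 0 < y) :
    ((x + y) * x * y)⁻¹ ≤ x ^ (-(3 / 2) : ℝ) * y ^ (-(3 / 2) : ℝ) := by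
  have hxy : 0 < x * y := mul_pos hx hy
  rw [← Real.mul_rpow hx.le hy.le, Real.rpow_neg hxy.le]
  gcongr
  have hsqrt : √(x * y) ≤ x + y := Real.sqrt_le_iff.2 ⟨by positivity, by nlinarith⟩
  calc (x * y) ^ (3 / 2 : ℝ) = x * y * √(x * y) := by
        rw [Real.sqrt_eq_rpow, ← Real.rpow_one_add' hxy.le (by norm_num)]
        norm_num
    _ ≤ (x + y) * x * y := by nlinarith

theorem summable_add_one_rpow_neg_three_halves :
    Summable fun n : ℕ => ((n : ℝ) + 1) ^ (-(3 / 2) : ℝ) := by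
  simpa using (summable_nat_add_iff 1).2
    (Real.summable_nat_rpow.2 (by norm_num : (-(3 / 2) : ℝ) < -1))

noncomputable def zetaTwoOneSymmSummand (p : ℕ × ℕ) : ℝ :=
  (((p.1 : ℝ) + p.2 + 2) * ((p.1 : ℝ) + 1) * ((p.2 : ℝ) + 1))⁻¹

theorem summable_zetaTwoOneSymmSummand : Summable zetaTwoOneSymmSummand := by
  have h := summable_add_one_rpow_neg_three_halves
  refine (h.mul_of_nonneg h (fun _ => by positivity) (fun _ => by positivity)).of_nonneg_of_le
    (fun _ => by unfold zetaTwoOneSymmSummand; positivity) fun p => ?_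
  rw [zetaTwoOneSymmSummand]
  convert inv_add_mul_mul_le_rpow (x := (p.1 : ℝ) + 1) (y := (p.2 : ℝ) + 1)
    (by positivity) (by positivity) using 3
  ring

noncomputable def zetaTwoOneSummand (p : ℕ × ℕ) : ℝ :=
  (((p.1 : ℝ) + p.2 + 2) ^ 2 * ((p.1 : ℝ) + 1))⁻¹

theorem zetaTwoOneSummand_add_swap (p : ℕ × ℕ) :
    zetaTwoOneSummand p + zetaTwoOneSummand p.swap = zetaTwoOneSymmSummand p := by
  simp only [zetaTwoOneSummand, zetaTwoOneSymmSummand, Prod.fst_swap, Prod.snd_swap]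
  field_simp
  ring

theorem zetaTwoOneSummand_le_zetaTwoOneSymmSummand (p : ℕ × ℕ) :
    zetaTwoOneSummand p ≤ zetaTwoOneSymmSummand p := by
  rw [← zetaTwoOneSummand_add_swap]
  exact le_add_of_nonneg_right (by unfold zetaTwoOneSummand; positivity)

theorem hasSum_zetaTwoOneSymmSummand_fiber (k : ℕ) :
    HasSum (fun n => zetaTwoOneSymmSummand (k, n)) (harmonic (k + 1) / ((k : ℝ) + 1) ^ 2) := by
  refine ((hasSum_inv_sub_inv_harmonic (k + 1)).div_const _).congr_fun fun n => ?_
  simp only [zetaTwoOneSymmSummand]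
  push_cast
  field_simp
  ring

abbrev DoubleZetaIndex : Type := {p : ℕ × ℕ // 1 ≤ p.2 ∧ p.2 < p.1}

noncomputable def doubleZetaSummand (a b : ℕ) (p : DoubleZetaIndex) : ℝ :=
  1 / ((p.1.1 : ℝ) ^ a * (p.1.2 : ℝ) ^ b)

def prodEquivDoubleZetaIndex : ℕ × ℕ ≃ DoubleZetaIndex where
  toFun p := ⟨(p.1 + p.2 + 2, p.1 + 1), by omega⟩
  invFun q := (q.1.2 - 1, q.1.1 - q.1.2 - 1)
  left_inv p := by
    obtain ⟨a, b⟩ := p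
    simp only [Prod.mk.injEq]
    omega
  right_inv q := by
    obtain ⟨⟨m, n⟩, h⟩ := q
    simp only [Subtype.mk.injEq, Prod.mk.injEq]
    omega

def sigmaEquivDoubleZetaIndex : (Σ m : ℕ, Fin m) ≃ DoubleZetaIndex where
  toFun x := ⟨(x.1 + 1, x.2 + 1), by omega⟩
  invFun q := ⟨q.1.1 - 1, q.1.2 - 1, by omega⟩
  left_inv x := by
    obtain ⟨m, j, hj⟩ := x
    rfl
  right_inv q := by
    obtain ⟨⟨m, n⟩, h⟩ := q
    simp only [Subtype.mk.injEq, Prod.mk.injEq]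
    omega

theorem doubleZetaSummand_two_one_comp_prodEquiv :
    doubleZetaSummand 2 1 ∘ prodEquivDoubleZetaIndex = zetaTwoOneSummand := by
  funext p
  simp only [Function.comp_apply, doubleZetaSummand, zetaTwoOneSummand, prodEquivDoubleZetaIndex,
    Equiv.coe_fn_mk]
  push_cast
  ring

theorem hasSum_doubleZetaSummand_two_one : HasSum (doubleZetaSummand 2 1) (doubleZeta 2 1) := by
  have h : Summable zetaTwoOneSummand :=
    summable_zetaTwoOneSymmSummand.of_nonneg_of_le
      (fun _ => by unfold zetaTwoOneSummand; positivity) zetaTwoOneSummand_le_zetaTwoOneSymmSummand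
  rw [← doubleZetaSummand_two_one_comp_prodEquiv] at h
  exact (prodEquivDoubleZetaIndex.summable_iff.1 h).hasSum

theorem hasSum_zetaTwoOneSummand : HasSum zetaTwoOneSummand (doubleZeta 2 1) :=
  doubleZetaSummand_two_one_comp_prodEquiv ▸
    prodEquivDoubleZetaIndex.hasSum_iff.2 hasSum_doubleZetaSummand_two_one

theorem hasSum_harmonic_div_sq :
    HasSum (fun m : ℕ => (harmonic m : ℝ) / ((m : ℝ) + 1) ^ 2) (doubleZeta 2 1) := by
  refine (sigmaEquivDoubleZetaIndex.hasSum_iff.2 hasSum_doubleZetaSummand_two_one).sigma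
    fun m => ?_
  have hsum : ∑ j : Fin m, doubleZetaSummand 2 1 (sigmaEquivDoubleZetaIndex ⟨m, j⟩)
      = (harmonic m : ℝ) / ((m : ℝ) + 1) ^ 2 := by
    simp only [doubleZetaSummand, sigmaEquivDoubleZetaIndex, Equiv.coe_fn_mk, harmonic]
    push_cast
    rw [Fin.sum_univ_eq_sum_range (fun j => 1 / (((m : ℝ) + 1) ^ 2 * ((j : ℝ) + 1) ^ 1)),
      sum_div]
    refine sum_congr rfl fun j _ => ?_
    field_simp
  exact hsum ▸ hasSum_fintype _

theorem hasSum_harmonic_succ_div_sq :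
    HasSum (fun m : ℕ => (harmonic (m + 1) : ℝ) / ((m : ℝ) + 1) ^ 2) (2 * doubleZeta 2 1) := by
  have hswap := (Equiv.prodComm ℕ ℕ).hasSum_iff.2 hasSum_zetaTwoOneSummand
  have hsymm : HasSum zetaTwoOneSymmSummand (2 * doubleZeta 2 1) := by
    rw [two_mul]
    exact (hasSum_zetaTwoOneSummand.add hswap).congr_fun
      fun p => (zetaTwoOneSummand_add_swap p).symm
  exact hsymm.prod_fiberwise hasSum_zetaTwoOneSymmSummand_fiber

/-- Euler's relation `ζ(2,1) = ζ(3)`. -/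
theorem euler_zeta_two_one_eq_zeta_three :
    doubleZeta 2 1 = ∑' m : ℕ, 1 / ((m : ℝ) + 1) ^ 3 := by
  have h := hasSum_harmonic_succ_div_sq.sub hasSum_harmonic_div_sq
  rw [two_mul, add_sub_cancel_right] at h
  refine (h.congr_fun fun m => ?_).tsum_eq.symm
  rw [harmonic_succ]
  push_cast
  field_simp
  ring
end

section
/- Sum formula for double zeta values: for every integer k ≥ 3, ∑_{a=2}^{k-1} ζ(a, k-a) = ζ(k), i.e., ζ(k-1,1) + ζ(k-2,2) + ... + ζ(2,k-2) = ζ(k). -/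
open Finset

/-!
For `m > n ≥ 1`, summing a geometric progression gives
`∑_{a=2}^{k-1} 1/(m^a n^(k-a)) + 1/((m-n) m^(k-1)) = 1/((m-n) m n^(k-2))`.
Summed over all such pairs, the second term on the left gives `ζ(k-1,1)` (substitute `n ↦ m - n`),
while on the right the sum over `m` for fixed `n` telescopes to `H_n / n^(k-1)`, and
`∑_n H_n / n^(k-1) = ζ(k) + ζ(k-1,1)`. Cancelling the finite value `ζ(k-1,1)` gives the formula.
The double series are rearranged in `ℝ≥0∞`, where this needs no summability bookkeeping.
-/

open Filter Topology
open scoped ENNReal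

theorem hasSum_sub_add_of_antitone {f : ℕ → ℝ} (hf : Antitone f)
    (hlim : Tendsto f atTop (𝓝 0)) (N : ℕ) :
    HasSum (fun d ↦ f d - f (d + N)) (∑ t ∈ range N, f t) := by
  rw [hasSum_iff_tendsto_nat_of_nonneg fun d ↦ sub_nonneg.2 (hf (Nat.le_add_right d N))]
  have hpartial : ∀ D, ∑ d ∈ range D, (f d - f (d + N))
      = ∑ t ∈ range N, f t - ∑ t ∈ range N, f (D + t) := by
    intro D
    have h := (sum_range_add f D N).symm.trans (add_comm D N ▸ sum_range_add f N D)
    simp only [sum_sub_distrib, add_comm _ N]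
    linarith
  have htail : Tendsto (fun D ↦ ∑ t ∈ range N, f (D + t)) atTop (𝓝 0) := by
    simpa using tendsto_finsetSum (range N) fun t _ ↦ hlim.comp (tendsto_add_atTop_nat t)
  simpa [hpartial] using tendsto_const_nhds.sub htail

theorem hasSum_one_div_add_mul_add {x : ℝ} (hx : 0 < x) {N : ℕ} (hN : 0 < N) :
    HasSum (fun d : ℕ ↦ 1 / ((d + x) * (d + x + N))) ((∑ t ∈ range N, 1 / (t + x)) / N) := by
  have hf : Antitone fun d : ℕ ↦ 1 / ((d : ℝ) + x) := fun d e hde ↦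
    one_div_le_one_div_of_le (by positivity) (by gcongr)
  have hlim : Tendsto (fun d : ℕ ↦ 1 / ((d : ℝ) + x)) atTop (𝓝 0) := by
    simp only [one_div]
    exact (tendsto_natCast_atTop_atTop.atTop_add tendsto_const_nhds).inv_tendsto_atTop
  have hterm : (fun d : ℕ ↦ 1 / ((d + x) * (d + x + N)))
      = fun d : ℕ ↦ (1 / ((d : ℝ) + x) - 1 / (((d + N : ℕ) : ℝ) + x)) / N := by
    ext d
    have : (N : ℝ) ≠ 0 := by positivity
    push_cast
    field_simp
    ring
  rw [hterm]
  exact (hasSum_sub_add_of_antitone hf hlim N).div_const _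

theorem sum_range_one_div_pow_mul_pow_add {m n : ℝ} (hm : m ≠ 0) (hn : n ≠ 0) (hmn : m - n ≠ 0)
    (c : ℕ) :
    ∑ t ∈ range c, 1 / (m ^ (t + 2) * n ^ (c - t)) + 1 / ((m - n) * m ^ (c + 1))
      = 1 / ((m - n) * m * n ^ c) := by
  induction c with
  | zero => simp
  | succ c ih =>
    have hshift : ∑ t ∈ range c, 1 / (m ^ (t + 1 + 2) * n ^ (c + 1 - (t + 1)))
        = (1 / m) * ∑ t ∈ range c, 1 / (m ^ (t + 2) * n ^ (c - t)) := by
      rw [mul_sum]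
      refine sum_congr rfl fun t _ ↦ ?_
      rw [Nat.add_sub_add_right, pow_succ]
      field_simp
    rw [sum_range_succ', hshift, eq_sub_of_add_eq ih, Nat.sub_zero]
    field_simp
    ring

theorem sum_Icc_one_div_pow_mul_pow_add {m n : ℝ} (hm : m ≠ 0) (hn : n ≠ 0) (hmn : m - n ≠ 0)
    {k : ℕ} (hk : 2 ≤ k) :
    ∑ a ∈ Icc 2 (k - 1), 1 / (m ^ a * n ^ (k - a)) + 1 / ((m - n) * m ^ (k - 1))
      = 1 / ((m - n) * m * n ^ (k - 2)) := by
  obtain ⟨c, rfl⟩ := Nat.exists_eq_add_of_le' hk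
  rw [Nat.add_sub_cancel, ← sum_range_one_div_pow_mul_pow_add hm hn hmn c,
    show c + 2 - 1 = c + 1 by omega, ← Finset.Ico_add_one_right_eq_Icc, sum_Ico_eq_sum_range]
  congr 1
  refine sum_congr rfl fun t _ ↦ ?_
  rw [add_comm 2 t, Nat.add_sub_add_right]

theorem ENNReal.tsum_prod_eq_tsum_sum_range (f : ℕ → ℕ → ℝ≥0∞) :
    ∑' q : ℕ × ℕ, f (q.1 + q.2 + 1) q.1 = ∑' n, ∑ t ∈ range n, f n t := by
  rw [tsum_eq_zero_add' (f := fun n ↦ ∑ t ∈ range n, f n t) ENNReal.summable, sum_range_zero,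
    zero_add, ← HasAntidiagonal.sigmaAntidiagonalEquivProd.tsum_eq, ENNReal.tsum_sigma']
  refine tsum_congr fun n ↦ ?_
  simp only [HasAntidiagonal.sigmaAntidiagonalEquivProd_apply]
  rw [Finset.tsum_subtype (antidiagonal n) fun q ↦ f (q.1 + q.2 + 1) q.1,
    Nat.sum_antidiagonal_eq_sum_range_succ_mk]
  refine sum_congr rfl fun t ht ↦ ?_
  rw [Nat.add_sub_cancel' (Nat.lt_succ_iff.1 (mem_range.1 ht))]

-- Pairs `m > n ≥ 1` are indexed by `(n - 1, m - n - 1) ∈ ℕ × ℕ`.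
def doubleZetaIndexEquiv : ℕ × ℕ ≃ {p : ℕ × ℕ // 1 ≤ p.2 ∧ p.2 < p.1} where
  toFun q := ⟨(q.1 + q.2 + 2, q.1 + 1), by omega⟩
  invFun p := (p.1.2 - 1, p.1.1 - p.1.2 - 1)
  left_inv q := by
    ext
    · simp
    · simp; omega
  right_inv p := by
    obtain ⟨⟨m, n⟩, h⟩ := p
    ext <;> simp <;> omega

noncomputable def doubleZetaTerm (a b : ℕ) (q : ℕ × ℕ) : ℝ :=
  1 / (((q.1 : ℝ) + q.2 + 2) ^ a * ((q.1 : ℝ) + 1) ^ b)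

theorem doubleZetaTerm_nonneg (a b : ℕ) (q : ℕ × ℕ) : 0 ≤ doubleZetaTerm a b q := by
  unfold doubleZetaTerm; positivity

theorem doubleZeta_eq_tsum (a b : ℕ) : doubleZeta a b = ∑' q, doubleZetaTerm a b q := by
  rw [doubleZeta, ← doubleZetaIndexEquiv.tsum_eq]
  refine tsum_congr fun q ↦ ?_
  simp [doubleZetaIndexEquiv, doubleZetaTerm]

theorem doubleZeta_nonneg (a b : ℕ) : 0 ≤ doubleZeta a b :=
  doubleZeta_eq_tsum a b ▸ tsum_nonneg (doubleZetaTerm_nonneg a b)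

theorem summable_doubleZetaTerm {a b : ℕ} (ha : 2 ≤ a) (hb : 1 ≤ b) :
    Summable (doubleZetaTerm a b) := by
  have hg : Summable fun q : ℕ × ℕ ↦
      1 / ((q.1 : ℝ) + 1) * (1 / ((q.2 + ((q.1 : ℝ) + 1)) * (q.2 + ((q.1 : ℝ) + 1) + (1 : ℕ)))) := by
    have hrow (i : ℕ) := (hasSum_one_div_add_mul_add (x := (i : ℝ) + 1) (by positivity)
      one_pos).mul_left (1 / ((i : ℝ) + 1))
    refine (summable_prod_of_nonneg fun q ↦ by dsimp; positivity).2
      ⟨fun i ↦ (hrow i).summable, ?_⟩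
    refine ((summable_nat_add_iff 1).2 (Real.summable_one_div_nat_pow.2 one_lt_two)).congr
      fun i ↦ ?_
    rw [(hrow i).tsum_eq]
    norm_num [sq]
  refine hg.of_nonneg_of_le (doubleZetaTerm_nonneg a b) fun q ↦ ?_
  have hn : (1 : ℝ) ≤ q.1 + 1 := le_add_of_nonneg_left q.1.cast_nonneg
  rw [doubleZetaTerm, one_div_mul_one_div]
  refine one_div_le_one_div_of_le (by positivity) ?_
  calc ((q.1 : ℝ) + 1) * ((q.2 + ((q.1 : ℝ) + 1)) * (q.2 + ((q.1 : ℝ) + 1) + (1 : ℕ)))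
      ≤ ((q.1 : ℝ) + q.2 + 2) ^ 2 * ((q.1 : ℝ) + 1) := by push_cast; nlinarith
    _ ≤ ((q.1 : ℝ) + q.2 + 2) ^ a * ((q.1 : ℝ) + 1) ^ b := by
      gcongr
      · linarith [q.2.cast_nonneg (α := ℝ)]
      · exact le_self_pow₀ hn (by omega)

theorem hasSum_one_div_mul_mul_pow (n c : ℕ) :
    HasSum (fun d : ℕ ↦ 1 / (((d : ℝ) + 1) * ((n : ℝ) + d + 2) * ((n : ℝ) + 1) ^ c))
      (∑ t ∈ range (n + 1), 1 / (((n : ℝ) + 1) ^ (c + 1) * ((t : ℝ) + 1))) := by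
  have hterm : (fun d : ℕ ↦ 1 / (((d : ℝ) + 1) * ((n : ℝ) + d + 2) * ((n : ℝ) + 1) ^ c))
      = fun d : ℕ ↦ 1 / ((n : ℝ) + 1) ^ c * (1 / ((d + 1) * (d + 1 + ((n + 1 : ℕ) : ℝ)))) := by
    ext d
    push_cast
    field_simp
    ring
  have hval : ∑ t ∈ range (n + 1), 1 / (((n : ℝ) + 1) ^ (c + 1) * ((t : ℝ) + 1))
      = 1 / ((n : ℝ) + 1) ^ c * ((∑ t ∈ range (n + 1), 1 / ((t : ℝ) + 1)) / ((n + 1 : ℕ) : ℝ)) := by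
    rw [mul_div_assoc', mul_sum, sum_div]
    refine sum_congr rfl fun t _ ↦ ?_
    push_cast
    field_simp
    ring
  rw [hterm, hval]
  exact (hasSum_one_div_add_mul_add one_pos n.succ_pos).mul_left _

noncomputable def doubleZetaENNReal (a b : ℕ) : ℝ≥0∞ :=
  ∑' q, ENNReal.ofReal (doubleZetaTerm a b q)

theorem ofReal_doubleZeta {a b : ℕ} (ha : 2 ≤ a) (hb : 1 ≤ b) :
    ENNReal.ofReal (doubleZeta a b) = doubleZetaENNReal a b := by
  rw [doubleZeta_eq_tsum, ENNReal.ofReal_tsum_of_nonneg (doubleZetaTerm_nonneg a b)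
    (summable_doubleZetaTerm ha hb), doubleZetaENNReal]

theorem sum_doubleZetaENNReal_add_eq_tsum {k : ℕ} (hk : 2 ≤ k) :
    ∑ a ∈ Icc 2 (k - 1), doubleZetaENNReal a (k - a) + doubleZetaENNReal (k - 1) 1
      = ∑' q : ℕ × ℕ, ENNReal.ofReal
          (1 / (((q.2 : ℝ) + 1) * ((q.1 : ℝ) + q.2 + 2) * ((q.1 : ℝ) + 1) ^ (k - 2))) := by
  have hswap : doubleZetaENNReal (k - 1) 1
      = ∑' q : ℕ × ℕ, ENNReal.ofReal (1 / (((q.2 : ℝ) + 1) * ((q.1 : ℝ) + q.2 + 2) ^ (k - 1))) := by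
    rw [doubleZetaENNReal, ← (Equiv.prodComm ℕ ℕ).tsum_eq]
    refine tsum_congr fun q ↦ ?_
    simp only [doubleZetaTerm, Equiv.prodComm_apply, Prod.fst_swap, Prod.snd_swap, pow_one]
    ring_nf
  rw [hswap]
  unfold doubleZetaENNReal
  rw [← Summable.tsum_finsetSum fun _ _ ↦ ENNReal.summable, ← ENNReal.tsum_add]
  refine tsum_congr fun q ↦ ?_
  rw [← ENNReal.ofReal_sum_of_nonneg fun a _ ↦ doubleZetaTerm_nonneg a (k - a) q,
    ← ENNReal.ofReal_add (sum_nonneg fun a _ ↦ doubleZetaTerm_nonneg a (k - a) q) (by positivity)]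
  have hmn : ((q.1 : ℝ) + q.2 + 2) - (q.1 + 1) = q.2 + 1 := by ring
  have h := sum_Icc_one_div_pow_mul_pow_add (m := q.1 + q.2 + 2) (n := q.1 + 1) (by positivity)
    (by positivity) (by rw [hmn]; positivity) hk
  rw [hmn] at h
  exact congrArg ENNReal.ofReal h

theorem tsum_eq_tsum_add_doubleZetaENNReal {k : ℕ} (hk : 2 ≤ k) :
    ∑' q : ℕ × ℕ, ENNReal.ofReal
        (1 / (((q.2 : ℝ) + 1) * ((q.1 : ℝ) + q.2 + 2) * ((q.1 : ℝ) + 1) ^ (k - 2)))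
      = ∑' n : ℕ, ENNReal.ofReal (1 / ((n : ℝ) + 1) ^ k) + doubleZetaENNReal (k - 1) 1 := by
  obtain ⟨c, rfl⟩ := Nat.exists_eq_add_of_le' hk
  have hrow (n : ℕ) : ∑' d : ℕ, ENNReal.ofReal
      (1 / (((d : ℝ) + 1) * ((n : ℝ) + d + 2) * ((n : ℝ) + 1) ^ c))
      = ∑ t ∈ range n, ENNReal.ofReal (1 / (((n : ℝ) + 1) ^ (c + 1) * ((t : ℝ) + 1)))
        + ENNReal.ofReal (1 / ((n : ℝ) + 1) ^ (c + 2)) := by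
    have h := hasSum_one_div_mul_mul_pow n c
    rw [← ENNReal.ofReal_tsum_of_nonneg (fun d ↦ by positivity) h.summable, h.tsum_eq,
      ENNReal.ofReal_sum_of_nonneg fun t _ ↦ by positivity, sum_range_succ, ← pow_succ]
  simp only [Nat.add_sub_cancel, show c + 2 - 1 = c + 1 by omega]
  rw [ENNReal.tsum_prod', tsum_congr hrow, ENNReal.tsum_add, add_comm,
    ← ENNReal.tsum_prod_eq_tsum_sum_range]
  congr 1
  refine tsum_congr fun q ↦ ?_
  simp only [doubleZetaTerm, pow_one]
  push_cast
  ring_nf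

/-- Sum formula for double zeta values. -/
theorem sum_formula_double_zeta (k : ℕ) (hk : 3 ≤ k) :
    ∑ a ∈ Finset.Icc 2 (k - 1), doubleZeta a (k - a)
      = ∑' m : ℕ, 1 / ((m : ℝ) + 1) ^ k := by
  have hfin : doubleZetaENNReal (k - 1) 1 ≠ ⊤ := by
    rw [← ofReal_doubleZeta (a := k - 1) (by omega) le_rfl]
    exact ENNReal.ofReal_ne_top
  have hsum : ∑ a ∈ Icc 2 (k - 1), doubleZetaENNReal a (k - a)
      = ∑' n : ℕ, ENNReal.ofReal (1 / ((n : ℝ) + 1) ^ k) :=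
    (ENNReal.add_left_inj hfin).1 <| (sum_doubleZetaENNReal_add_eq_tsum (by omega)).trans
      (tsum_eq_tsum_add_doubleZetaENNReal (by omega))
  have hzeta : Summable fun n : ℕ ↦ 1 / ((n : ℝ) + 1) ^ k :=
    ((summable_nat_add_iff 1).2 (Real.summable_one_div_nat_pow (p := k) |>.2 (by omega))).congr
      fun n ↦ by push_cast; rfl
  rw [← ENNReal.ofReal_eq_ofReal_iff (sum_nonneg fun a _ ↦ doubleZeta_nonneg a (k - a))
      (tsum_nonneg fun n ↦ by positivity),
    ENNReal.ofReal_sum_of_nonneg fun a _ ↦ doubleZeta_nonneg a (k - a),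
    ENNReal.ofReal_tsum_of_nonneg (fun n ↦ by positivity) hzeta, ← hsum]
  refine sum_congr rfl fun a ha ↦ ofReal_doubleZeta ?_ ?_ <;> simp only [mem_Icc] at ha <;> omega
end
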